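/- Let s = s_{γ₁} ⋯ s_{γ_{l'}} be a product of reflections in linearly independent roots γ_i, acting on the span h' without nonzero fixed vectors, and let C = (1+s)(1-s)^{-1} P_{h'} denote its Cayley transform composed with orthogonal projection onto h'. Then the bilinear form B(x,y) = (x,y) + (Cx, y) on h' satisfies B(γ_i, γ_j) = 0 for all i < j and B(γ_i,γ_i) = (γ_i,γ_i); in particular B is 'upper-triangular' in the basis γ₁,…,γ_{l'}. -/

import Mathlib

/-!
Write `s = s_{γ₀} ∘ s'` with `s'` the product of the remaining reflections, and `y' = s' y`.
Then `y - s y = (y - y') + c • γ₀` with `y - y' ∈ span (γ₁, …)` and `γ₀` outside that span, so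
comparing with `y - s y = γ_i` pins down both components. For `i = 0` this forces `y' = y`, and a
fixed vector of a product of reflections in independent roots is orthogonal to all of them (the
same comparison, peeling off one reflection at a time); for `i > 0` it forces `c = 0` and
`y - s' y = γ_i`, and we recurse. Hence `(y, γ_j) = 0` for `j > i`, which together with
`s y = y - γ_i` gives `B(γ_i, γ_j) = 2 (y, γ_j) = 0`. On the diagonal, `(y + s y, y - s y) = 0`
because `s` is an isometry.
-/

open RealInnerProductSpace

/-- The reflection `s_γ(v) = v - 2(v,γ)/(γ,γ) γ` in the root `γ`. -/
noncomputable def rootReflection {E : Type*} [NormedAddCommGroup E] [InnerProductSpace ℝ E]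
    (γ : E) (v : E) : E :=
  v - (2 * ⟪v, γ⟫ / ⟪γ, γ⟫) • γ

open Submodule

theorem Submodule.eq_and_eq_of_add_smul_eq_add_smul {K V : Type*} [DivisionRing K]
    [AddCommGroup V] [Module K V] {p : Submodule K V} {a u w : V} {c d : K} (ha : a ∉ p)
    (hu : u ∈ p) (hw : w ∈ p) (h : u + c • a = w + d • a) : c = d ∧ u = w := by
  have hmem : (c - d) • a ∈ p := by
    rw [sub_smul, show c • a - d • a = w - u by rw [sub_eq_sub_iff_add_eq_add, add_comm, h]]
    exact sub_mem hw hu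
  have hcd : c = d := by
    by_contra hne
    exact ha ((p.smul_mem_iff (sub_ne_zero.mpr hne)).mp hmem)
  subst hcd
  exact ⟨rfl, add_right_cancel h⟩

section

variable {E : Type*} [NormedAddCommGroup E] [InnerProductSpace ℝ E]

theorem sub_rootReflection (a x y : E) :
    y - rootReflection a x = (y - x) + (2 * ⟪x, a⟫ / ⟪a, a⟫) • a := by
  rw [rootReflection]
  abel

theorem norm_rootReflection (a x : E) : ‖rootReflection a x‖ = ‖x‖ := by
  rcases eq_or_ne a 0 with rfl | ha
  · simp [rootReflection]
  have haa : ⟪a, a⟫ ≠ 0 := inner_self_ne_zero.mpr ha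
  rw [← sq_eq_sq₀ (norm_nonneg _) (norm_nonneg _), ← real_inner_self_eq_norm_sq,
    ← real_inner_self_eq_norm_sq]
  simp only [rootReflection, inner_sub_left, inner_sub_right, real_inner_smul_left,
    real_inner_smul_right, real_inner_comm a x]
  field_simp
  ring

noncomputable def rootReflectionProd {n : ℕ} (v : Fin n → E) : E → E :=
  (List.ofFn fun i => rootReflection (v i)).foldr (· ∘ ·) id

theorem rootReflectionProd_succ {n : ℕ} (v : Fin (n + 1) → E) (x : E) :
    rootReflectionProd v x = rootReflection (v 0) (rootReflectionProd (Fin.tail v) x) := by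
  simp [rootReflectionProd, List.ofFn_succ, Fin.tail]

theorem norm_rootReflectionProd {n : ℕ} (v : Fin n → E) (x : E) :
    ‖rootReflectionProd v x‖ = ‖x‖ := by
  induction n with
  | zero => rfl
  | succ n ih => rw [rootReflectionProd_succ, norm_rootReflection, ih]

theorem self_sub_rootReflectionProd_mem_span {n : ℕ} (v : Fin n → E) (x : E) :
    x - rootReflectionProd v x ∈ span ℝ (Set.range v) := by
  induction n with
  | zero => simp [rootReflectionProd]
  | succ n ih =>
    rw [rootReflectionProd_succ, sub_rootReflection]
    exact add_mem (span_mono (Set.range_comp_subset_range Fin.succ v) (ih _))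
      (smul_mem _ _ (subset_span ⟨0, rfl⟩))

theorem LinearIndependent.inner_eq_zero_of_rootReflectionProd_eq_self {n : ℕ} {v : Fin n → E}
    (hv : LinearIndependent ℝ v) {y : E} (hy : rootReflectionProd v y = y) (j : Fin n) :
    ⟪y, v j⟫ = 0 := by
  induction n with
  | zero => exact j.elim0
  | succ n ih =>
    rw [linearIndependent_finSucc] at hv
    set y' := rootReflectionProd (Fin.tail v) y
    have h : (y - y') + (2 * ⟪y', v 0⟫ / ⟪v 0, v 0⟫) • v 0 = 0 + (0 : ℝ) • v 0 := by
      rw [← sub_rootReflection, ← rootReflectionProd_succ, hy, sub_self, zero_smul, add_zero]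
    obtain ⟨hc, hyy'⟩ := eq_and_eq_of_add_smul_eq_add_smul hv.2
      (self_sub_rootReflectionProd_mem_span _ y) (zero_mem _) h
    have hy' : y' = y := (sub_eq_zero.mp hyy').symm
    refine Fin.cases ?_ (ih hv.1 hy') j
    have hv0 : v 0 ≠ 0 := fun h0 => hv.2 (h0 ▸ zero_mem _)
    rw [← hy']
    simpa [hv0] using hc

theorem LinearIndependent.inner_eq_zero_of_sub_rootReflectionProd_eq {n : ℕ} {v : Fin n → E}
    (hv : LinearIndependent ℝ v) {y : E} {i j : Fin n} (hij : i < j)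
    (hy : y - rootReflectionProd v y = v i) : ⟪y, v j⟫ = 0 := by
  induction n with
  | zero => exact i.elim0
  | succ n ih =>
    rw [linearIndependent_finSucc] at hv
    set y' := rootReflectionProd (Fin.tail v) y
    have hyy' : y - y' ∈ span ℝ (Set.range (Fin.tail v)) :=
      self_sub_rootReflectionProd_mem_span _ y
    rw [rootReflectionProd_succ, sub_rootReflection] at hy
    obtain ⟨j, rfl⟩ := Fin.exists_succ_eq.mpr (Fin.ne_zero_of_lt hij)
    induction i using Fin.cases with
    | zero =>
      obtain ⟨-, hyy'⟩ := eq_and_eq_of_add_smul_eq_add_smul hv.2 hyy' (zero_mem _)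
        (by rw [hy, zero_add, one_smul] : _ = 0 + (1 : ℝ) • v 0)
      exact hv.1.inner_eq_zero_of_rootReflectionProd_eq_self (sub_eq_zero.mp hyy').symm j
    | succ i =>
      obtain ⟨-, hyy'⟩ := eq_and_eq_of_add_smul_eq_add_smul hv.2 hyy' (subset_span ⟨i, rfl⟩)
        (by rw [hy, zero_smul, add_zero]; rfl : _ = Fin.tail v i + (0 : ℝ) • v 0)
      exact ih hv.1 (Fin.succ_lt_succ_iff.mp hij) hyy'

end

theorem twisted_form_upper_triangular_general
    {E : Type*} [NormedAddCommGroup E] [InnerProductSpace ℝ E]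
    {l' : ℕ} (γ : Fin l' → E) (hind : LinearIndependent ℝ γ)
    (s : E → E)
    (hs : s = (List.ofFn fun i : Fin l' => rootReflection (γ i)).foldr (· ∘ ·) id) :
    (∀ i j : Fin l', i < j →
      ∀ y ∈ Submodule.span ℝ (Set.range γ), y - s y = γ i →
        ⟪γ i, γ j⟫ + ⟪y + s y, γ j⟫ = 0) ∧
    (∀ i : Fin l',
      ∀ y ∈ Submodule.span ℝ (Set.range γ), y - s y = γ i →
        ⟪γ i, γ i⟫ + ⟪y + s y, γ i⟫ = ⟪γ i, γ i⟫) := by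
  change s = rootReflectionProd γ at hs
  subst hs
  constructor
  · intro i j hij y _ hy
    have hsy : rootReflectionProd γ y = y - γ i := by rw [← hy, sub_sub_cancel]
    rw [hsy, inner_add_left, inner_sub_left,
      hind.inner_eq_zero_of_sub_rootReflectionProd_eq hij hy]
    ring
  · intro i y _ hy
    rw [← hy, (real_inner_add_sub_eq_zero_iff _ _).mpr (norm_rootReflectionProd γ y).symm,
      add_zero]

/-- with `s = s_{γ₁} ⋯ s_{γ_{l'}}` a product of reflections in linearly
independent roots, acting without nonzero fixed vectors on `h' = span(γ_i)`, the bilinear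
form `B(x,y) = (x,y) + (Cx,y)` (where `C = (1+s)(1-s)⁻¹ P_{h'}`, so `C γ_i = y + s y` with
`y ∈ h'`, `y - s y = γ_i`) satisfies `B(γ_i,γ_j) = 0` for `i < j` and
`B(γ_i,γ_i) = (γ_i,γ_i)`. -/
theorem twisted_form_upper_triangular
    {E : Type*} [NormedAddCommGroup E] [InnerProductSpace ℝ E]
    {l' : ℕ} (γ : Fin l' → E) (hind : LinearIndependent ℝ γ)
    (s : E → E)
    (hs : s = (List.ofFn fun i : Fin l' => rootReflection (γ i)).foldr (· ∘ ·) id)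
    (hnofix : ∀ v ∈ Submodule.span ℝ (Set.range γ), s v = v → v = 0) :
    (∀ i j : Fin l', i < j →
      ∀ y ∈ Submodule.span ℝ (Set.range γ), y - s y = γ i →
        ⟪γ i, γ j⟫ + ⟪y + s y, γ j⟫ = 0) ∧
    (∀ i : Fin l',
      ∀ y ∈ Submodule.span ℝ (Set.range γ), y - s y = γ i →
        ⟪γ i, γ i⟫ + ⟪y + s y, γ i⟫ = ⟪γ i, γ i⟫) :=
  twisted_form_upper_triangular_general γ hind s hs
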